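/- Let C be a Barr exact category and consider, in Ext(C), a commutative square φ̄ ∘ z_A = z_B ∘ φ whose four sides z_A : a → ā, z_B : b → b̄, φ : a → b and φ̄ : ā → b̄ are all double extensions, and where the codomain component of z_B is an identity morphism of C (so that b and b̄ have the same codomain). Then this square is a pushout in the category Ext(C) if and only if the induced commutative square in C between the domains of a, ā, b and b̄ (whose sides are the domain components of z_A, φ, φ̄ and z_B) is a pushout in C. -/

import Mathlib

/-!
If the square of domain components is a pushout, so is the square of codomain components (its
side `zAb` is an epimorphism and the opposite side is an identity), and a square in `Ext C` whose
two component squares are pushouts in `C` is a pushout in `Ext C`.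

Conversely, let `u : A'₁ ⟶ W` and `v : B₁ ⟶ W` satisfy `zAt ≫ u = φt ≫ v`. Factor
`(v, b) : B₁ ⟶ W × B₀` as a regular epimorphism `e : B₁ ⟶ I` followed by a jointly monic pair
`(v_I, q)`; regularity makes `q` a regular epimorphism, i.e. an object of `Ext C`, and joint
monicity lets `φt ≫ e` descend along the regular epimorphism `zAt`. This gives a cocone in `Ext C`
with vertex `q`, which factors through `b'` by the pushout property; the domain component of the
factorisation followed by `v_I` is the required map `B'₁ ⟶ W`.
-/

open CategoryTheory CategoryTheory.Limits

universe v u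

namespace Paper

variable {C : Type u} [Category.{v} C]

/-- `f` is a regular epimorphism. -/
def IsRegEpi {X Y : C} (f : X ⟶ Y) : Prop := Nonempty (RegularEpi f)

/-- A regular category: a finitely complete category with coequalizers of kernel pairs in
which regular epimorphisms are stable under pullback. -/
class RegularCat (C : Type u) [Category.{v} C] [HasFiniteLimits C] : Prop where
  hasCoeqOfKernelPairs : ∀ {X Y : C} (f : X ⟶ Y),
    HasCoequalizer (pullback.fst f f) (pullback.snd f f)
  regEpiPullbackStable : ∀ {X Y Z : C} (f : X ⟶ Y) (g : Z ⟶ Y),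
    IsRegEpi f → IsRegEpi (pullback.snd f g)

/-- An internal equivalence relation given by a parallel pair `r₁ r₂ : R ⟶ X`. -/
structure IsEquivRel [HasFiniteLimits C] {R X : C} (r₁ r₂ : R ⟶ X) : Prop where
  jointlyMono : Mono (prod.lift r₁ r₂)
  refl : ∃ d : X ⟶ R, d ≫ r₁ = 𝟙 X ∧ d ≫ r₂ = 𝟙 X
  symm : ∃ s : R ⟶ R, s ≫ r₁ = r₂ ∧ s ≫ r₂ = r₁
  trans : ∃ t : pullback r₂ r₁ ⟶ R,
    t ≫ r₁ = pullback.fst r₂ r₁ ≫ r₁ ∧ t ≫ r₂ = pullback.snd r₂ r₁ ≫ r₂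

/-- A Barr exact category: a regular category in which every internal equivalence relation
is effective (i.e. is a kernel pair). -/
class BarrExact (C : Type u) [Category.{v} C] [HasFiniteLimits C] extends RegularCat C : Prop where
  equivRelEffective : ∀ {R X : C} (r₁ r₂ : R ⟶ X), IsEquivRel r₁ r₂ →
    ∃ (Y : C) (f : X ⟶ Y), IsKernelPair f r₁ r₂

section DoubleExt
variable [HasFiniteLimits C]

/-- A double extension: a commutative square `αt ≫ fB = fA ≫ αb` of regular epimorphisms
whose comparison morphism to the pullback is also a regular epimorphism. -/
structure IsDoubleExt {A₁ A₀ B₁ B₀ : C} (fA : A₁ ⟶ A₀) (fB : B₁ ⟶ B₀)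
    (αt : A₁ ⟶ B₁) (αb : A₀ ⟶ B₀) : Prop where
  w : αt ≫ fB = fA ≫ αb
  left : IsRegEpi fA
  right : IsRegEpi fB
  top : IsRegEpi αt
  bot : IsRegEpi αb
  comparison : IsRegEpi (pullback.lift fA αt w.symm : A₁ ⟶ pullback αb fB)

end DoubleExt

/-- The category `Ext C` of extensions: the full subcategory of the arrow category of `C`
determined by the regular epimorphisms. -/
abbrev ExtCat (C : Type u) [Category.{v} C] : Type max u v :=
  ObjectProperty.FullSubcategory (fun f : Arrow C => IsRegEpi f.hom)

/-- An object of `Ext C` from a regular epimorphism. -/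
def ExtCat.mk' {X Y : C} (f : X ⟶ Y) (hf : IsRegEpi f) : ExtCat C :=
  ⟨Arrow.mk f, hf⟩

/-- The top (domain) component of a morphism of `Ext C`. -/
def ExtCat.homLeft {f g : ExtCat C} (φ : f ⟶ g) : f.obj.left ⟶ g.obj.left :=
  CommaMorphism.left φ.hom

/-- The bottom (codomain) component of a morphism of `Ext C`. -/
def ExtCat.homRight {f g : ExtCat C} (φ : f ⟶ g) : f.obj.right ⟶ g.obj.right :=
  CommaMorphism.right φ.hom

lemma ExtCat.homLeft_comp {f g h : ExtCat C} (a : f ⟶ g) (b : g ⟶ h) :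
    ExtCat.homLeft (a ≫ b) = ExtCat.homLeft a ≫ ExtCat.homLeft b := rfl

lemma ExtCat.homRight_comp {f g h : ExtCat C} (a : f ⟶ g) (b : g ⟶ h) :
    ExtCat.homRight (a ≫ b) = ExtCat.homRight a ≫ ExtCat.homRight b := rfl

lemma ExtCat.hom_w {f g : ExtCat C} (φ : f ⟶ g) :
    ExtCat.homLeft φ ≫ g.obj.hom = f.obj.hom ≫ ExtCat.homRight φ :=
  CommaMorphism.w φ.hom

/-- A morphism of `Ext C` from a commutative square in `C`. -/
def ExtCat.homMk' {X₁ X₀ Y₁ Y₀ : C} {f : X₁ ⟶ X₀} {g : Y₁ ⟶ Y₀}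
    {hf : IsRegEpi f} {hg : IsRegEpi g}
    (u : X₁ ⟶ Y₁) (v : X₀ ⟶ Y₀) (w : u ≫ g = f ≫ v) :
    ExtCat.mk' f hf ⟶ ExtCat.mk' g hg :=
  ObjectProperty.homMk (Arrow.homMk (u := u) (v := v) w)

/-- A (commutative) square in `C`, with left vertical `left : A₁ ⟶ A₀`, right vertical
`right : B₁ ⟶ B₀`, top horizontal `top : A₁ ⟶ B₁` and bottom horizontal `bot : A₀ ⟶ B₀`. -/
structure Sq (C : Type u) [Category.{v} C] where
  A₁ : C
  A₀ : C
  B₁ : C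
  B₀ : C
  left : A₁ ⟶ A₀
  right : B₁ ⟶ B₀
  top : A₁ ⟶ B₁
  bot : A₀ ⟶ B₀
  w : top ≫ right = left ≫ bot

/-- The square is a double extension. -/
def Sq.IsDE [HasFiniteLimits C] (s : Sq C) : Prop :=
  IsDoubleExt s.left s.right s.top s.bot

/-- A commutative cube, presented as a morphism of squares `Φ : s ⟶ t`. -/
structure SqHom (s t : Sq C) where
  h₁₁ : s.A₁ ⟶ t.A₁
  h₁₀ : s.A₀ ⟶ t.A₀
  h₀₁ : s.B₁ ⟶ t.B₁
  h₀₀ : s.B₀ ⟶ t.B₀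
  wA : h₁₁ ≫ t.left = s.left ≫ h₁₀
  wB : h₀₁ ≫ t.right = s.right ≫ h₀₀
  wt : h₁₁ ≫ t.top = s.top ≫ h₀₁
  wb : h₁₀ ≫ t.bot = s.bot ≫ h₀₀

/-- Composition of cubes (as morphisms of squares). -/
def SqHom.comp {s t u : Sq C} (Φ : SqHom s t) (Ψ : SqHom t u) : SqHom s u where
  h₁₁ := Φ.h₁₁ ≫ Ψ.h₁₁
  h₁₀ := Φ.h₁₀ ≫ Ψ.h₁₀
  h₀₁ := Φ.h₀₁ ≫ Ψ.h₀₁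
  h₀₀ := Φ.h₀₀ ≫ Ψ.h₀₀
  wA := by rw [Category.assoc, Ψ.wA, ← Category.assoc, Φ.wA, Category.assoc]
  wB := by rw [Category.assoc, Ψ.wB, ← Category.assoc, Φ.wB, Category.assoc]
  wt := by rw [Category.assoc, Ψ.wt, ← Category.assoc, Φ.wt, Category.assoc]
  wb := by rw [Category.assoc, Ψ.wb, ← Category.assoc, Φ.wb, Category.assoc]

section Cube
variable [HasFiniteLimits C]

/-- Seen as a morphism `(σ, β) : s ⟶ t` between the double extensions `s` (as the arrow
`s.left → s.right`) and `t`, the face `σ` of the cube: the square from `s.left` to `t.left`. -/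
def SqHom.sigmaSq {s t : Sq C} (Φ : SqHom s t) : Sq C where
  A₁ := s.A₁
  A₀ := s.A₀
  B₁ := t.A₁
  B₀ := t.A₀
  left := s.left
  right := t.left
  top := Φ.h₁₁
  bot := Φ.h₁₀
  w := Φ.wA

/-- The face `β` of the cube: the square from `s.right` to `t.right`. -/
def SqHom.betaSq {s t : Sq C} (Φ : SqHom s t) : Sq C where
  A₁ := s.B₁
  A₀ := s.B₀
  B₁ := t.B₁
  B₀ := t.B₀
  left := s.right
  right := t.right
  top := Φ.h₀₁
  bot := Φ.h₀₀
  w := Φ.wB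

/-- Top component of the componentwise pullback of `t` (i.e. `α`) and `betaSq Φ` (i.e. `β`). -/
noncomputable def SqHom.P₁ {s t : Sq C} (Φ : SqHom s t) : C := pullback t.top Φ.h₀₁

/-- Bottom component of the componentwise pullback of `α` and `β`. -/
noncomputable def SqHom.P₀ {s t : Sq C} (Φ : SqHom s t) : C := pullback t.bot Φ.h₀₀

/-- The induced arrow between the components of the componentwise pullback of `α` and `β`. -/
noncomputable def SqHom.fP {s t : Sq C} (Φ : SqHom s t) : Φ.P₁ ⟶ Φ.P₀ :=
  pullback.map t.top Φ.h₀₁ t.bot Φ.h₀₀ t.left s.right t.right t.w Φ.wB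

/-- The top comparison morphism. -/
noncomputable def SqHom.c₁ {s t : Sq C} (Φ : SqHom s t) : s.A₁ ⟶ Φ.P₁ :=
  pullback.lift Φ.h₁₁ s.top Φ.wt

/-- The bottom comparison morphism. -/
noncomputable def SqHom.c₀ {s t : Sq C} (Φ : SqHom s t) : s.A₀ ⟶ Φ.P₀ :=
  pullback.lift Φ.h₁₀ s.bot Φ.wb

lemma SqHom.comp_w {s t : Sq C} (Φ : SqHom s t) : Φ.c₁ ≫ Φ.fP = s.left ≫ Φ.c₀ := by
  apply pullback.hom_ext
  · erw [Category.assoc, Category.assoc, pullback.lift_fst, pullback.lift_fst, ← Category.assoc]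
    erw [pullback.lift_fst]
    exact Φ.wA
  · erw [Category.assoc, Category.assoc, pullback.lift_snd, pullback.lift_snd, ← Category.assoc]
    erw [pullback.lift_snd]
    exact s.w

/-- The comparison square of the cube `Φ`, from `s.left` to the componentwise pullback
of `α` and `β`. -/
noncomputable def SqHom.compSq {s t : Sq C} (Φ : SqHom s t) : Sq C where
  A₁ := s.A₁
  A₀ := s.A₀
  B₁ := Φ.P₁
  B₀ := Φ.P₀
  left := s.left
  right := Φ.fP
  top := Φ.c₁
  bot := Φ.c₀
  w := Φ.comp_w

/-- A `3`-cubical extension: the two opposite faces `γ = s` and `α = t`, the two connecting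
faces `σ` and `β`, and the comparison square to the componentwise pullback of `α` and `β`
are all double extensions. -/
def SqHom.Is3CubExt {s t : Sq C} (Φ : SqHom s t) : Prop :=
  s.IsDE ∧ t.IsDE ∧ Φ.sigmaSq.IsDE ∧ Φ.betaSq.IsDE ∧ Φ.compSq.IsDE

end Cube

/-- The cube `Φ : s ⟶ t` is a limit cube: the cone from the initial vertex `s.A₁` on the
diagram formed by the remaining seven vertices is a limit cone. -/
def SqHom.IsLimitCube {s t : Sq C} (Φ : SqHom s t) : Prop :=
  ∀ (W : C) (wA₀ : W ⟶ s.A₀) (wB₁ : W ⟶ s.B₁) (wtA₁ : W ⟶ t.A₁),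
    wA₀ ≫ s.bot = wB₁ ≫ s.right →
    wA₀ ≫ Φ.h₁₀ = wtA₁ ≫ t.left →
    wB₁ ≫ Φ.h₀₁ = wtA₁ ≫ t.top →
    ∃! u : W ⟶ s.A₁, u ≫ s.left = wA₀ ∧ u ≫ s.top = wB₁ ∧ u ≫ Φ.h₁₁ = wtA₁

/-- A discrete fibration (of order 3): a `3`-cubical extension which is a limit cube. -/
def SqHom.IsDiscFib [HasFiniteLimits C] {s t : Sq C} (Φ : SqHom s t) : Prop :=
  Φ.Is3CubExt ∧ Φ.IsLimitCube
section Galois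
variable [HasFiniteLimits C]

/-- A strongly E-Birkhoff Galois structure on `C`: a full replete reflective subcategory
(given by the predicate `inB`, the reflector `F` and the unit `η`) such that every unit
component is a regular epimorphism and every naturality square of the unit at a regular
epimorphism is a double extension. -/
structure BirkhoffStructure (C : Type u) [Category.{v} C] [HasFiniteLimits C] where
  inB : C → Prop
  replete : ∀ {X Y : C}, inB X → (X ≅ Y) → inB Y
  F : C ⥤ C
  η : 𝟭 C ⟶ F
  obj_inB : ∀ A : C, inB (F.obj A)
  unit_regEpi : ∀ A : C, IsRegEpi (η.app A)
  univ : ∀ {A X : C}, inB X → ∀ g : A ⟶ X, ∃! h : F.obj A ⟶ X, η.app A ≫ h = g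
  stronglyBirkhoff : ∀ {A B : C} (f : A ⟶ B), IsRegEpi f →
    IsDoubleExt f (F.map f) (η.app A) (η.app B)

/-- A trivial covering: a regular epimorphism whose unit naturality square is a pullback. -/
def TrivialCovering (G : BirkhoffStructure C) {T E : C} (t : T ⟶ E) : Prop :=
  IsRegEpi t ∧ IsPullback (G.η.app T) t (G.F.map t) (G.η.app E)

/-- A covering: a regular epimorphism whose pullback along some regular epimorphism is a
trivial covering. -/
def Covering (G : BirkhoffStructure C) {A B : C} (c : A ⟶ B) : Prop :=
  IsRegEpi c ∧ ∃ (E : C) (e : E ⟶ B), IsRegEpi e ∧ TrivialCovering G (pullback.snd c e)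

end Galois

/-- The underlying square in `C` of a morphism of `Ext C`. -/
def sqOfHom {f g : ExtCat C} (φ : f ⟶ g) : Sq C where
  A₁ := f.obj.left
  A₀ := f.obj.right
  B₁ := g.obj.left
  B₀ := g.obj.right
  left := f.obj.hom
  right := g.obj.hom
  top := ExtCat.homLeft φ
  bot := ExtCat.homRight φ
  w := ExtCat.hom_w φ

/-- The underlying cube in `C` of a naturality square in `Ext C` of a natural
transformation `η₁ : 𝟭 (Ext C) ⟶ F₁` at a morphism `φ : f ⟶ g` of `Ext C`. -/
def natCube (F₁ : ExtCat C ⥤ ExtCat C) (η₁ : 𝟭 (ExtCat C) ⟶ F₁) {f g : ExtCat C}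
    (φ : f ⟶ g) : SqHom (sqOfHom φ) (sqOfHom (F₁.map φ)) where
  h₁₁ := ExtCat.homLeft (η₁.app f)
  h₁₀ := ExtCat.homRight (η₁.app f)
  h₀₁ := ExtCat.homLeft (η₁.app g)
  h₀₀ := ExtCat.homRight (η₁.app g)
  wA := ExtCat.hom_w (η₁.app f)
  wB := ExtCat.hom_w (η₁.app g)
  wt := by
    have h := congrArg ExtCat.homLeft (η₁.naturality φ)
    rw [ExtCat.homLeft_comp, ExtCat.homLeft_comp] at h
    exact h.symm
  wb := by
    have h := congrArg ExtCat.homRight (η₁.naturality φ)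
    rw [ExtCat.homRight_comp, ExtCat.homRight_comp] at h
    exact h.symm

section LevelOne
variable [HasFiniteLimits C]

/-- The level-one Galois structure induced by a strongly E-Birkhoff Galois structure `G`:
the coverings form a reflective subcategory of `Ext C`, with reflector `F₁` and unit `η₁`,
every unit component is a double extension, and the reflection is strongly E₂-Birkhoff. -/
structure LevelOne (G : BirkhoffStructure C) where
  F₁ : ExtCat C ⥤ ExtCat C
  η₁ : 𝟭 (ExtCat C) ⟶ F₁
  obj_cov : ∀ f : ExtCat C, Covering G (F₁.obj f).obj.hom
  univ : ∀ {f x : ExtCat C}, Covering G x.obj.hom → ∀ g : f ⟶ x,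
    ∃! h : F₁.obj f ⟶ x, η₁.app f ≫ h = g
  unit_DE : ∀ f : ExtCat C, (sqOfHom (η₁.app f)).IsDE
  stronglyBirkhoff : ∀ {f g : ExtCat C} (φ : f ⟶ g), (sqOfHom φ).IsDE →
    (natCube F₁ η₁ φ).Is3CubExt

/-- A trivial double covering: a morphism of `Ext C` whose underlying square is a double
extension and whose `η₁`-naturality square is a pullback in `Ext C`. -/
def TrivDoubleCov {G : BirkhoffStructure C} (L : LevelOne G) {f g : ExtCat C}
    (φ : f ⟶ g) : Prop :=
  (sqOfHom φ).IsDE ∧ IsPullback (L.η₁.app f) φ (L.F₁.map φ) (L.η₁.app g)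

/-- A double covering: a double extension `α : d ⟶ c` in `Ext C` such that the pullback of
`α` along some double extension `γ : e ⟶ c` is a trivial double covering. -/
def DoubleCov {G : BirkhoffStructure C} (L : LevelOne G) {d c : ExtCat C}
    (α : d ⟶ c) : Prop :=
  (sqOfHom α).IsDE ∧ ∃ (e : ExtCat C) (γ : e ⟶ c), (sqOfHom γ).IsDE ∧
    ∃ (p : ExtCat C) (pγ : p ⟶ e) (pα : p ⟶ d),
      IsPullback pγ pα γ α ∧ TrivDoubleCov L pγ

end LevelOne

lemma IsPushout.of_forall_existsUnique {D : Type*} [Category D] {Z X Y P : D} {f : Z ⟶ X}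
    {g : Z ⟶ Y} {inl : X ⟶ P} {inr : Y ⟶ P} (sq : CommSq f g inl inr)
    (h : ∀ {W : D} (u : X ⟶ W) (v : Y ⟶ W), f ≫ u = g ≫ v →
      ∃! t : P ⟶ W, inl ≫ t = u ∧ inr ≫ t = v) :
    IsPushout f g inl inr :=
  .of_isColimit' sq <| PushoutCocone.IsColimit.mk _
    (fun s => (h s.inl s.inr s.condition).exists.choose)
    (fun s => (h s.inl s.inr s.condition).exists.choose_spec.1)
    (fun s => (h s.inl s.inr s.condition).exists.choose_spec.2)
    (fun s _ h₁ h₂ => (h s.inl s.inr s.condition).unique ⟨h₁, h₂⟩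
      (h s.inl s.inr s.condition).exists.choose_spec)

lemma IsRegularEpi.of_comp [Regular C] {X Y Z : C} (e : X ⟶ Y) (q : Y ⟶ Z)
    [IsRegularEpi (e ≫ q)] : IsRegularEpi q :=
  have := strongEpi_of_strongEpi e q
  inferInstance

lemma exists_isRegularEpi_comp_jointlyMono [Regular C] {Y W B : C} (v : Y ⟶ W) (b : Y ⟶ B)
    [IsRegularEpi b] :
    ∃ (I : C) (e : Y ⟶ I) (vI : I ⟶ W) (q : I ⟶ B), IsRegularEpi q ∧
      e ≫ vI = v ∧ e ≫ q = b ∧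
      ∀ {T : C} (g₁ g₂ : T ⟶ I), g₁ ≫ vI = g₂ ≫ vI → g₁ ≫ q = g₂ ≫ q → g₁ = g₂ := by
  let F := Regular.strongEpiMonoFactorisation (prod.lift v b)
  have : IsRegularEpi (F.e ≫ F.m ≫ prod.snd) := by rwa [F.fac_assoc, prod.lift_snd]
  refine ⟨F.I, F.e, F.m ≫ prod.fst, F.m ≫ prod.snd,
    IsRegularEpi.of_comp F.e _, by rw [F.fac_assoc, prod.lift_fst],
    by rw [F.fac_assoc, prod.lift_snd], fun g₁ g₂ h₁ h₂ => ?_⟩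
  rw [← cancel_mono F.m]
  ext <;> simpa

lemma isRegEpi_iff_isRegularEpi {X Y : C} (f : X ⟶ Y) : IsRegEpi f ↔ IsRegularEpi f :=
  ⟨fun h => ⟨h⟩, fun h => h.1⟩

lemma IsRegEpi.epi {X Y : C} {f : X ⟶ Y} (hf : IsRegEpi f) : Epi f :=
  have := (isRegEpi_iff_isRegularEpi f).1 hf
  inferInstance

instance RegularCat.regular [HasFiniteLimits C] [RegularCat C] : Regular C where
  hasCoequalizer_of_isKernelPair {_ _ _ f g₁ g₂} h :=
    have := RegularCat.hasCoeqOfKernelPairs f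
    hasColimit_of_iso (F := parallelPair (pullback.fst f f) (pullback.snd f f))
      (parallelPair.ext (F := parallelPair g₁ g₂) h.isoPullback (Iso.refl _))
  regularEpiIsStableUnderBaseChange :=
    .of_forall_exists_isPullback fun f g _ hg =>
      ⟨_, pullback.snd g f, pullback.fst g f, (IsPullback.of_hasPullback g f).flip,
        (isRegEpi_iff_isRegularEpi _).1
          (RegularCat.regEpiPullbackStable g f ((isRegEpi_iff_isRegularEpi g).2 hg))⟩

namespace ExtCat

lemma hom_ext' {f g : ExtCat C} {α β : f ⟶ g} (h₁ : homLeft α = homLeft β)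
    (h₂ : homRight α = homRight β) : α = β :=
  ObjectProperty.hom_ext _ (CommaMorphism.ext h₁ h₂)

def homMk {f g : ExtCat C} (u : f.obj.left ⟶ g.obj.left) (v : f.obj.right ⟶ g.obj.right)
    (w : u ≫ g.obj.hom = f.obj.hom ≫ v) : f ⟶ g :=
  ObjectProperty.homMk (Arrow.homMk (u := u) (v := v) w)

variable {f g h k : ExtCat C} {α : f ⟶ g} {β : f ⟶ h} {γ : g ⟶ k} {δ : h ⟶ k}

lemma homLeft_comm (w : α ≫ γ = β ≫ δ) : homLeft α ≫ homLeft γ = homLeft β ≫ homLeft δ := by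
  rw [← homLeft_comp, w, homLeft_comp]

lemma homRight_comm (w : α ≫ γ = β ≫ δ) :
    homRight α ≫ homRight γ = homRight β ≫ homRight δ := by
  rw [← homRight_comp, w, homRight_comp]

lemma isPushout_of_isPushout_homLeft_of_isPushout_homRight
    (hL : IsPushout (homLeft α) (homLeft β) (homLeft γ) (homLeft δ))
    (hR : IsPushout (homRight α) (homRight β) (homRight γ) (homRight δ)) :
    IsPushout α β γ δ := by
  refine IsPushout.of_forall_existsUnique ⟨hom_ext' hL.w hR.w⟩ fun {x} u v huv => ?_
  have hl := homLeft_comm huv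
  have hr := homRight_comm huv
  have w : hL.desc _ _ hl ≫ x.obj.hom = k.obj.hom ≫ hR.desc _ _ hr := by
    apply hL.hom_ext
    · rw [hL.inl_desc_assoc, hom_w, reassoc_of% (hom_w γ), hR.inl_desc]
    · rw [hL.inr_desc_assoc, hom_w, reassoc_of% (hom_w δ), hR.inr_desc]
  refine ⟨homMk _ _ w, ⟨hom_ext' (hL.inl_desc ..) (hR.inl_desc ..),
    hom_ext' (hL.inr_desc ..) (hR.inr_desc ..)⟩, fun t ⟨ht₁, ht₂⟩ => hom_ext' ?_ ?_⟩
  · apply hL.hom_ext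
    · rw [← homLeft_comp, ht₁]; exact (hL.inl_desc ..).symm
    · rw [← homLeft_comp, ht₂]; exact (hL.inr_desc ..).symm
  · apply hR.hom_ext
    · rw [← homRight_comp, ht₁]; exact (hR.inl_desc ..).symm
    · rw [← homRight_comp, ht₂]; exact (hR.inr_desc ..).symm

lemma exists_homLeft_desc_of_isPushout [Regular C] (H : IsPushout α β γ δ)
    (hα : IsRegEpi (homLeft α)) (hδ : IsIso (homRight δ)) {W : C}
    (u : g.obj.left ⟶ W) (v : h.obj.left ⟶ W) (huv : homLeft α ≫ u = homLeft β ≫ v) :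
    ∃ t : k.obj.left ⟶ W, homLeft γ ≫ t = u ∧ homLeft δ ≫ t = v := by
  have := (isRegEpi_iff_isRegularEpi _).1 hα
  have := (isRegEpi_iff_isRegularEpi _).1 h.property
  obtain ⟨I, e, vI, q, hq, hevI, heq, hjoint⟩ :=
    exists_isRegularEpi_comp_jointlyMono v h.obj.hom
  let r := homRight γ ≫ inv (homRight δ)
  have hr : homRight α ≫ r = homRight β := by
    rw [reassoc_of% (homRight_comm H.w), IsIso.hom_inv_id, Category.comp_id]
  have hβv : homLeft β ≫ e ≫ vI = homLeft α ≫ u := by rw [hevI, huv]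
  have hβq : homLeft β ≫ e ≫ q = homLeft α ≫ g.obj.hom ≫ r := by
    rw [heq, hom_w, ← hr, reassoc_of% (hom_w α)]
  obtain ⟨ut, hut⟩ : ∃ ut, homLeft α ≫ ut = homLeft β ≫ e :=
    ⟨EffectiveEpi.desc _ (homLeft β ≫ e) fun g₁ g₂ hg => hjoint _ _
      (by simp only [Category.assoc, hβv, reassoc_of% hg])
      (by simp only [Category.assoc, hβq, reassoc_of% hg]), EffectiveEpi.fac ..⟩
  have hutv : ut ≫ vI = u := by rw [← cancel_epi (homLeft α), reassoc_of% hut, hβv]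
  have hutq : ut ≫ q = g.obj.hom ≫ r := by rw [← cancel_epi (homLeft α), reassoc_of% hut, hβq]
  let x := ExtCat.mk' q ((isRegEpi_iff_isRegularEpi q).2 hq)
  let s₁ : g ⟶ x := homMk ut r hutq
  let s₂ : h ⟶ x := homMk e (𝟙 _) (heq.trans (Category.comp_id _).symm)
  have hs : α ≫ s₁ = β ≫ s₂ := hom_ext' hut (hr.trans (Category.comp_id _).symm)
  let d : k.obj.left ⟶ I := homLeft (H.desc s₁ s₂ hs)
  have hγd : homLeft γ ≫ d = ut := congrArg homLeft (H.inl_desc s₁ s₂ hs)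
  have hδd : homLeft δ ≫ d = e := congrArg homLeft (H.inr_desc s₁ s₂ hs)
  exact ⟨d ≫ vI, by rw [reassoc_of% hγd, hutv], by rw [reassoc_of% hδd, hevI]⟩

lemma isPushout_homLeft_of_isPushout [Regular C] (H : IsPushout α β γ δ)
    (hα : IsRegEpi (homLeft α)) (hδL : Epi (homLeft δ)) (hδR : IsIso (homRight δ)) :
    IsPushout (homLeft α) (homLeft β) (homLeft γ) (homLeft δ) :=
  IsPushout.of_forall_existsUnique ⟨homLeft_comm H.w⟩ fun u v huv =>
    have ⟨t, ht⟩ := exists_homLeft_desc_of_isPushout H hα hδR u v huv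
    ⟨t, ht, fun _ ht' => (cancel_epi _).1 (ht'.2.trans ht.2.symm)⟩

end ExtCat

theorem statement_9_general {C : Type u} [Category.{v} C] [HasFiniteLimits C] [BarrExact C]
    {A₁ A₀ A'₁ A'₀ B₁ B'₁ B₀ : C}
    -- the four objects of `Ext C`:
    (a : A₁ ⟶ A₀) (a' : A'₁ ⟶ A'₀) (b : B₁ ⟶ B₀) (b' : B'₁ ⟶ B₀)
    -- the four sides, all double extensions, with the codomain component of `z_B` an
    -- identity:
    (zAt : A₁ ⟶ A'₁) (zAb : A₀ ⟶ A'₀) (hzA : IsDoubleExt a a' zAt zAb)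
    (zBt : B₁ ⟶ B'₁) (hzB : IsDoubleExt b b' zBt (𝟙 B₀))
    (φt : A₁ ⟶ B₁) (φb : A₀ ⟶ B₀) (hφ : IsDoubleExt a b φt φb)
    (φ't : A'₁ ⟶ B'₁) (φ'b : A'₀ ⟶ B₀) (hφ' : IsDoubleExt a' b' φ't φ'b)
    -- commutativity of the square in `Ext C`:
    (wbot : zAb ≫ φ'b = φb ≫ 𝟙 B₀) :
    -- the square `φ̄ ∘ z_A = z_B ∘ φ` is a pushout in `Ext C` iff the square of domain
    -- components is a pushout in `C`:
    IsPushout (ExtCat.homMk' (hf := hzA.left) (hg := hzA.right) zAt zAb hzA.w)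
        (ExtCat.homMk' (hf := hzA.left) (hg := hφ.right) φt φb hφ.w)
        (ExtCat.homMk' (hf := hzA.right) (hg := hφ'.right) φ't φ'b hφ'.w)
        (ExtCat.homMk' (hf := hφ.right) (hg := hφ'.right) zBt (𝟙 B₀) hzB.w) ↔
      IsPushout zAt φt φ't zBt := by
  have := hzA.bot.epi
  have hR : IsPushout zAb φb φ'b (𝟙 B₀) := .of_horiz_isIso_epi ⟨wbot⟩
  exact ⟨fun H => ExtCat.isPushout_homLeft_of_isPushout H hzA.top hzB.top.epi (IsIso.id B₀),
    fun hL => ExtCat.isPushout_of_isPushout_homLeft_of_isPushout_homRight hL hR⟩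

/-- In a Barr exact category, a commutative square in `Ext C` of double
extensions, in which the codomain component of `z_B` is an identity, is a pushout in
`Ext C` iff the induced square between the domains is a pushout in `C`. -/
theorem statement_9 {C : Type u} [Category.{v} C] [HasFiniteLimits C] [BarrExact C]
    {A₁ A₀ A'₁ A'₀ B₁ B'₁ B₀ : C}
    -- the four objects of `Ext C`:
    (a : A₁ ⟶ A₀) (a' : A'₁ ⟶ A'₀) (b : B₁ ⟶ B₀) (b' : B'₁ ⟶ B₀)
    -- the four sides, all double extensions, with the codomain component of `z_B` an
    -- identity:
    (zAt : A₁ ⟶ A'₁) (zAb : A₀ ⟶ A'₀) (hzA : IsDoubleExt a a' zAt zAb)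
    (zBt : B₁ ⟶ B'₁) (hzB : IsDoubleExt b b' zBt (𝟙 B₀))
    (φt : A₁ ⟶ B₁) (φb : A₀ ⟶ B₀) (hφ : IsDoubleExt a b φt φb)
    (φ't : A'₁ ⟶ B'₁) (φ'b : A'₀ ⟶ B₀) (hφ' : IsDoubleExt a' b' φ't φ'b)
    -- commutativity of the square in `Ext C`:
    (wtop : zAt ≫ φ't = φt ≫ zBt) (wbot : zAb ≫ φ'b = φb ≫ 𝟙 B₀) :
    -- the square `φ̄ ∘ z_A = z_B ∘ φ` is a pushout in `Ext C` iff the square of domain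
    -- components is a pushout in `C`:
    IsPushout (ExtCat.homMk' (hf := hzA.left) (hg := hzA.right) zAt zAb hzA.w)
        (ExtCat.homMk' (hf := hzA.left) (hg := hφ.right) φt φb hφ.w)
        (ExtCat.homMk' (hf := hzA.right) (hg := hφ'.right) φ't φ'b hφ'.w)
        (ExtCat.homMk' (hf := hφ.right) (hg := hφ'.right) zBt (𝟙 B₀) hzB.w) ↔
      IsPushout zAt φt φ't zBt :=
  statement_9_general a a' b b' zAt zAb hzA zBt hzB φt φb hφ φ't φ'b hφ' wbot

end Paper
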